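/- In the free group F₂ on α, β, for every nonnegative integer r, the number of elements of word length exactly 2r+2 that are conjugates of a power of α, a power of β, or a power of αβ is 8·3^r. -/

import Mathlib

abbrev F2 := FreeGroup (Fin 2)

def α : F2 := FreeGroup.of 0

def β : F2 := FreeGroup.of 1

/-! A conjugate `w γᵏ w⁻¹` of a nontrivial power of `γ ∈ {α, β, αβ}` can be rewritten as `u δᵐ u⁻¹`
with `δ` a rotation of a reduced word for `γ^{±1}` and `u δ u⁻¹` reduced as written: while the last
letter of the conjugator cancels against `δ`, move it into `δ`, which rotates `δ`. Then `u δᵐ u⁻¹`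
is reduced as written too, of length `2|u| + m|δ|`. Word length modulo 2 is a homomorphism, so in
even length the exponent of `α` or `β` is even and `δ` can be taken among the eight words
`α^{±2}, β^{±2}, αβ, βα, (αβ)⁻¹, (βα)⁻¹`. The reduced word of an element of length `2r + 2` then
determines `δ` and `u`, with `m = r + 1 - |u|`; for each `δ` the admissible `u` are the reduced
words of length at most `r` whose last letter avoids two letters, and there are
`1 + ∑_{t<r} 2·3ᵗ = 3ʳ` of them. -/

theorem List.take_length_flatten_replicate {γ : Type*} (l : List γ) {m : ℕ} (hm : m ≠ 0) :
    (List.replicate m l).flatten.take l.length = l := by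
  obtain ⟨m, rfl⟩ := Nat.exists_eq_succ_of_ne_zero hm
  simp [List.replicate_succ]

theorem zpow_eq_pow_natAbs_or {G : Type*} [Group G] (x : G) (k : ℤ) :
    x ^ k = x ^ k.natAbs ∨ x ^ k = x⁻¹ ^ k.natAbs := by
  rcases Int.natAbs_eq k with h | h
  · left; rw [h, zpow_natCast, Int.natAbs_natCast]
  · right; rw [h, zpow_neg, zpow_natCast, Int.natAbs_neg, Int.natAbs_natCast, inv_pow]

namespace FreeGroup

open List

variable {X : Type*}

theorem fst_eq_imp_snd_eq_iff {a b : X × Bool} : (a.1 = b.1 → a.2 = b.2) ↔ a ≠ (b.1, !b.2) := by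
  obtain ⟨a₁, a₂⟩ := a
  obtain ⟨b₁, b₂⟩ := b
  cases a₂ <;> cases b₂ <;> simp [eq_comm]

theorem IsReduced.invRev {L : List (X × Bool)} (h : IsReduced L) : IsReduced (invRev L) := by
  unfold IsReduced FreeGroup.invRev at *
  rw [isChain_reverse, isChain_map]
  exact h.imp fun a b hab h₁ => by simpa using (hab h₁.symm).symm

theorem mk_append_append_invRev (u c : List (X × Bool)) :
    mk (u ++ c ++ invRev u) = mk u * mk c * (mk u)⁻¹ := by
  rw [inv_mk, mul_mk, mul_mk]

theorem isReduced_append_concat_conj_iff {v c : List (X × Bool)} {x : X × Bool}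
    (hv : IsReduced (v ++ [x])) :
    IsReduced (v ++ [x] ++ c ++ invRev (v ++ [x])) ↔ IsReduced (x :: c ++ invRev [x]) := by
  rw [invRev_append]
  constructor
  · intro h
    exact h.infix ⟨v, invRev v, by simp⟩
  · intro h
    have h₁ : IsReduced (v ++ [x] ++ c ++ invRev [x]) := by
      simpa using hv.append_overlap (L₃ := c ++ invRev [x]) (by simpa using h) (by simp)
    have h₂ : IsReduced (invRev [x] ++ invRev v) := by simpa using hv.invRev
    simpa using h₁.append_overlap h₂ (by simp [FreeGroup.invRev])

theorem isReduced_cons_append_invRev {c : List (X × Bool)} (hc : IsReduced c) (hne : c ≠ [])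
    {x : X × Bool} (hhead : c.head? ≠ some (x.1, !x.2)) (hlast : c.getLast? ≠ some x) :
    IsReduced (x :: c ++ invRev [x]) := by
  obtain ⟨y, t, rfl⟩ := exists_cons_of_ne_nil hne
  rw [IsReduced, isChain_append, ← IsReduced, ← IsReduced, getLast?_cons_cons]
  refine ⟨isReduced_cons_cons.2 ⟨fst_eq_imp_snd_eq_iff.2 ?_, hc⟩, by simp [FreeGroup.invRev], ?_⟩
  · rintro rfl; exact hhead (by simp)
  · rintro a ha _ ⟨⟩
    exact fst_eq_imp_snd_eq_iff.2 fun h => hlast (by simpa [h] using ha)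

theorem exists_isReduced_append_append_invRev {C : Set (List (X × Bool))}
    (hC : ∀ c ∈ C, IsReduced c ∧ c ≠ []) (hrot : ∀ c ∈ C, c.rotate 1 ∈ C)
    {v : List (X × Bool)} (hv : IsReduced v) {c : List (X × Bool)} (hc : c ∈ C) :
    ∃ u, ∃ c' ∈ C, IsReduced (u ++ c' ++ invRev u) ∧
      mk (v ++ c ++ invRev v) = mk (u ++ c' ++ invRev u) := by
  induction v using List.reverseRecOn generalizing c with
  | nil => exact ⟨[], c, hc, by simpa using (hC c hc).1, rfl⟩
  | append_singleton v x ih =>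
    have hv' : IsReduced v := hv.infix (List.prefix_append _ _).isInfix
    obtain ⟨hcr, hne⟩ := hC c hc
    -- `x` cancels the first letter of `c`: conjugating by `x` rotates `c` to the left
    by_cases hhead : c.head? = some (x.1, !x.2)
    · have hx : mk [(x.1, !x.2)] = (mk [x])⁻¹ := by rw [inv_mk]; rfl
      obtain ⟨t, rfl⟩ : ∃ t, c = (x.1, !x.2) :: t := by
        obtain ⟨y, t, rfl⟩ := exists_cons_of_ne_nil hne
        exact ⟨t, by simpa using hhead⟩
      obtain ⟨u, c', hc', hu, heq⟩ := ih hv' (hrot _ hc)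
      refine ⟨u, c', hc', hu, heq ▸ ?_⟩
      rw [mk_append_append_invRev, mk_append_append_invRev, rotate_cons_succ, rotate_zero,
        ← singleton_append (l := t), ← mul_mk, ← mul_mk, ← mul_mk, hx]
      group
    -- `x⁻¹` cancels the last letter of `c`: conjugating by `x` rotates `c` to the right
    by_cases hlast : c.getLast? = some x
    · obtain ⟨t, rfl⟩ := List.getLast?_eq_some_iff.1 hlast
      have hrot' : ∀ n, (t ++ [x]).rotate n ∈ C := fun n => by
        induction n with
        | zero => simpa using hc
        | succ n ih => rw [← rotate_rotate]; exact hrot _ ih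
      obtain ⟨u, c', hc', hu, heq⟩ := ih hv' (by simpa using hrot' t.length)
      refine ⟨u, c', hc', hu, heq ▸ ?_⟩
      rw [mk_append_append_invRev, mk_append_append_invRev, ← singleton_append (l := t),
        ← mul_mk, ← mul_mk, ← mul_mk]
      group
    · exact ⟨v ++ [x], c, hc, (isReduced_append_concat_conj_iff hv).2
        (isReduced_cons_append_invRev hcr hne hhead hlast), rfl⟩

theorem exists_isReduced_conj [DecidableEq X] {C : Set (List (X × Bool))}
    (hC : ∀ c ∈ C, IsReduced c ∧ c ≠ []) (hrot : ∀ c ∈ C, c.rotate 1 ∈ C)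
    (w : FreeGroup X) {c : List (X × Bool)} (hc : c ∈ C) :
    ∃ u, ∃ c' ∈ C, IsReduced (u ++ c' ++ invRev u) ∧
      w * mk c * w⁻¹ = mk u * mk c' * (mk u)⁻¹ := by
  obtain ⟨u, c', hc', hu, h⟩ := exists_isReduced_append_append_invRev hC hrot isReduced_toWord hc
  refine ⟨u, c', hc', hu, ?_⟩
  rwa [mk_append_append_invRev, mk_append_append_invRev, mk_toWord] at h

theorem toWord_conj_pow [DecidableEq X] {u c : List (X × Bool)} (hc : IsCyclicallyReduced c)
    (h : IsReduced (u ++ c ++ invRev u)) {n : ℕ} (hn : n ≠ 0) :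
    (mk u * mk c ^ n * (mk u)⁻¹).toWord = u ++ (replicate n c).flatten ++ invRev u := by
  rw [pow_mk, ← mk_append_append_invRev, toWord_mk,
    (IsReduced.append_flatten_replicate_append hc h hn).reduce_eq]

theorem norm_conj_pow [DecidableEq X] {u c : List (X × Bool)} (hc : IsCyclicallyReduced c)
    (h : IsReduced (u ++ c ++ invRev u)) {n : ℕ} (hn : n ≠ 0) :
    (mk u * mk c ^ n * (mk u)⁻¹).norm = 2 * u.length + n * c.length := by
  rw [norm, toWord_conj_pow hc h hn]
  simp only [length_append, length_flatten, map_replicate, sum_replicate, smul_eq_mul,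
    invRev_length]
  ring

theorem not_isCyclicallyReduced_cons_append_invRev (x : X × Bool) (L : List (X × Bool)) :
    ¬IsCyclicallyReduced (x :: L ++ invRev [x]) := fun h => by
  simpa [FreeGroup.invRev] using (isCyclicallyReduced_cons_append_iff.1 h).2

theorem cons_append_append_invRev_cons (x : X × Bool) (u L : List (X × Bool)) :
    x :: u ++ L ++ invRev (x :: u) = x :: (u ++ L ++ invRev u) ++ invRev [x] := by
  rw [invRev_cons]
  simp

theorem eq_of_append_append_invRev_eq {u u' L L' : List (X × Bool)}
    (hL : IsCyclicallyReduced L) (hL' : IsCyclicallyReduced L')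
    (h : u ++ L ++ invRev u = u' ++ L' ++ invRev u') : u = u' ∧ L = L' := by
  induction u generalizing u' with
  | nil =>
    cases u' with
    | nil => simpa using h
    | cons x l' =>
      rw [cons_append_append_invRev_cons] at h
      simp only [List.nil_append, invRev_empty, List.append_nil] at h
      exact absurd (h ▸ hL) (not_isCyclicallyReduced_cons_append_invRev _ _)
  | cons x l ih =>
    cases u' with
    | nil =>
      rw [cons_append_append_invRev_cons] at h
      simp only [List.nil_append, invRev_empty, List.append_nil] at h
      exact absurd (h ▸ hL') (not_isCyclicallyReduced_cons_append_invRev _ _)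
    | cons x' l' =>
      rw [cons_append_append_invRev_cons, cons_append_append_invRev_cons] at h
      simp only [List.cons_append, List.cons.injEq] at h
      obtain ⟨rfl, h⟩ := h
      simpa using ih (List.append_cancel_right h)

def lengthParity : FreeGroup X →* Multiplicative (ZMod 2) :=
  lift fun _ => Multiplicative.ofAdd 1

theorem lengthParity_mk (L : List (X × Bool)) :
    lengthParity (mk L) = Multiplicative.ofAdd (L.length : ZMod 2) := by
  induction L with
  | nil => rfl
  | cons a L ih =>
    rw [← List.singleton_append, ← mul_mk, _root_.map_mul, ih]
    obtain ⟨x, _ | _⟩ := a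
    · rw [show mk [(x, false)] = (of x)⁻¹ by rw [of, inv_mk]; rfl]
      simp [lengthParity, ← ofAdd_neg, ← ofAdd_add, add_comm]
    · rw [show mk [(x, true)] = of x from rfl]
      simp [lengthParity, ← ofAdd_add, add_comm]

theorem lengthParity_eq [DecidableEq X] (x : FreeGroup X) :
    lengthParity x = Multiplicative.ofAdd (x.norm : ZMod 2) := by
  rw [norm, ← lengthParity_mk, mk_toWord]

theorem even_norm_conj_of_zpow_iff [DecidableEq X] (w : FreeGroup X) (a : X) (k : ℤ) :
    Even (w * of a ^ k * w⁻¹).norm ↔ Even k := by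
  have h : ((w * of a ^ k * w⁻¹).norm : ZMod 2) = k := by
    simpa [lengthParity, ← ofAdd_zsmul] using (lengthParity_eq (w * of a ^ k * w⁻¹)).symm
  rw [← ZMod.natCast_eq_zero_iff_even, ← ZMod.intCast_eq_zero_iff_even, h]

section Counting

variable [Fintype X] [DecidableEq X]

open Finset

instance : DecidablePred (@IsReduced X) := fun L => inferInstanceAs (Decidable (L.IsChain _))

def reducedWordsEndingOutside (B : Finset (X × Bool)) : ℕ → Finset (List (X × Bool))
  | 0 => Bᶜ.image ([·])
  | t + 1 => (reducedWordsEndingOutside B t).biUnion fun l =>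
      ({x | IsReduced (x :: l)} : Finset (X × Bool)).image (· :: l)

theorem mem_reducedWordsEndingOutside {B : Finset (X × Bool)} {t : ℕ} {l : List (X × Bool)} :
    l ∈ reducedWordsEndingOutside B t ↔
      IsReduced l ∧ l.length = t + 1 ∧ ∀ x ∈ l.getLast?, x ∉ B := by
  induction t generalizing l with
  | zero =>
    match l with
    | [] => simp [reducedWordsEndingOutside]
    | [x] => simp [reducedWordsEndingOutside]
    | _ :: _ :: _ => simp [reducedWordsEndingOutside]
  | succ t ih =>
    match l with
    | [] => simp [reducedWordsEndingOutside]
    | x :: l =>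
      simp only [reducedWordsEndingOutside, mem_biUnion, mem_image, mem_filter_univ, ih,
        List.cons.injEq, length_cons]
      constructor
      · rintro ⟨l', ⟨-, hl', hB⟩, x', hx', rfl, rfl⟩
        obtain ⟨y, l, rfl⟩ := exists_cons_of_ne_nil (ne_nil_of_length_eq_add_one hl')
        exact ⟨hx', by simpa using hl', by simpa using hB⟩
      · rintro ⟨hred, hl, hB⟩
        obtain ⟨y, l, rfl⟩ := exists_cons_of_ne_nil (ne_nil_of_length_eq_add_one (by simpa using hl))
        exact ⟨y :: l, ⟨(isReduced_cons_cons.1 hred).2, by simpa using hl, by simpa using hB⟩,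
          x, hred, rfl, rfl⟩

theorem card_reducedWordsEndingOutside (B : Finset (X × Bool)) (t : ℕ) :
    #(reducedWordsEndingOutside B t) = #Bᶜ * (2 * Fintype.card X - 1) ^ t := by
  induction t with
  | zero => simp [reducedWordsEndingOutside, card_image_of_injective _ List.singleton_injective]
  | succ t ih =>
    have hextend : ∀ l ∈ reducedWordsEndingOutside B t,
        #(({x | IsReduced (x :: l)} : Finset (X × Bool)).image (· :: l)) =
          2 * Fintype.card X - 1 := by
      intro l hl
      obtain ⟨hred, hlen, -⟩ := mem_reducedWordsEndingOutside.1 hl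
      obtain ⟨y, l, rfl⟩ := exists_cons_of_ne_nil (ne_nil_of_length_eq_add_one hlen)
      have : ({x | IsReduced (x :: y :: l)} : Finset (X × Bool)) = univ.erase (y.1, !y.2) := by
        ext x
        simp [isReduced_cons_cons, hred, fst_eq_imp_snd_eq_iff]
      rw [card_image_of_injective _ fun _ _ h => List.head_eq_of_cons_eq h, this,
        card_erase_of_mem (mem_univ _), card_univ, Fintype.card_prod, Fintype.card_bool, mul_comm]
    rw [reducedWordsEndingOutside, card_biUnion, sum_congr rfl hextend, sum_const, ih, smul_eq_mul,
      pow_succ]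
    · ring
    · intro l _ l' _ hne
      simp only [Function.onFun, Finset.disjoint_left, mem_image]
      rintro _ ⟨x, -, rfl⟩ ⟨x', -, h⟩
      exact hne (List.tail_eq_of_cons_eq h).symm

def blockingLetters (c : List (X × Bool)) : Finset (X × Bool) :=
  {x | ¬IsReduced (x :: c ++ invRev [x])}

theorem isReduced_append_append_invRev_iff {u c : List (X × Bool)} (hc : IsReduced c) :
    IsReduced (u ++ c ++ invRev u) ↔ IsReduced u ∧ ∀ x ∈ u.getLast?, x ∉ blockingLetters c := by
  rcases List.eq_nil_or_concat u with rfl | ⟨v, x, rfl⟩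
  · simp [hc]
  rw [concat_eq_append]
  constructor
  · intro h
    have hvx : IsReduced (v ++ [x]) := h.infix ⟨[], c ++ invRev (v ++ [x]), by simp⟩
    exact ⟨hvx, by simpa [blockingLetters] using (isReduced_append_concat_conj_iff hvx).1 h⟩
  · rintro ⟨hvx, hx⟩
    exact (isReduced_append_concat_conj_iff hvx).2 (by simpa [blockingLetters] using hx)

def reducedConjugators (c : List (X × Bool)) (r : ℕ) : Finset (List (X × Bool)) :=
  insert [] ((Finset.range r).biUnion (reducedWordsEndingOutside (blockingLetters c)))

theorem mem_reducedConjugators {c u : List (X × Bool)} (hc : IsReduced c) {r : ℕ} :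
    u ∈ reducedConjugators c r ↔ IsReduced (u ++ c ++ invRev u) ∧ u.length ≤ r := by
  rw [isReduced_append_append_invRev_iff hc]
  simp only [reducedConjugators, mem_insert, mem_biUnion, Finset.mem_range,
    mem_reducedWordsEndingOutside]
  rcases u with _ | ⟨x, l⟩
  · simp
  · simp only [reduceCtorEq, false_or, length_cons]
    constructor
    · rintro ⟨t, ht, hred, hlen, hB⟩
      exact ⟨⟨hred, hB⟩, by omega⟩
    · rintro ⟨⟨hred, hB⟩, hlen⟩
      exact ⟨l.length, by omega, hred, rfl, hB⟩

theorem card_reducedConjugators {c : List (X × Bool)} (hc : #(blockingLetters c) = 2) (r : ℕ) :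
    #(reducedConjugators c r) = (2 * Fintype.card X - 1) ^ r := by
  obtain ⟨k, hk⟩ : ∃ k, 2 * Fintype.card X = k + 2 := by
    refine ⟨2 * Fintype.card X - 2, ?_⟩
    have := hc ▸ card_le_univ (blockingLetters c)
    simp only [Fintype.card_prod, Fintype.card_bool] at this
    omega
  have hcompl : #(blockingLetters c)ᶜ = k := by
    rw [card_compl, hc, Fintype.card_prod, Fintype.card_bool, mul_comm, hk, Nat.add_sub_cancel]
  rw [reducedConjugators, card_insert_of_notMem, card_biUnion]
  · simp only [card_reducedWordsEndingOutside, hcompl, hk, ← mul_sum]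
    rw [show k + 2 - 1 = k + 1 by omega, mul_comm, geom_sum_mul_add]
  · intro t _ t' _ hne
    simp only [Function.onFun, Finset.disjoint_left, mem_reducedWordsEndingOutside]
    rintro l ⟨-, hl, -⟩ ⟨-, hl', -⟩
    omega
  · simp [mem_reducedWordsEndingOutside]

end Counting

end FreeGroup

open FreeGroup Finset

/-- `α², α⁻², β², β⁻², αβ, βα, (αβ)⁻¹, (βα)⁻¹` as words in the letters `(i, b)`. -/
def cores : Finset (List (Fin 2 × Bool)) :=
  {[(0, true), (0, true)], [(0, false), (0, false)], [(1, true), (1, true)],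
    [(1, false), (1, false)], [(0, true), (1, true)], [(1, true), (0, true)],
    [(1, false), (0, false)], [(0, false), (1, false)]}

theorem isCyclicallyReduced_of_mem_cores : ∀ δ ∈ cores, IsCyclicallyReduced δ := by
  unfold IsCyclicallyReduced FreeGroup.IsReduced; decide

theorem length_of_mem_cores : ∀ δ ∈ cores, δ.length = 2 := by decide

theorem rotate_mem_cores : ∀ δ ∈ cores, δ.rotate 1 ∈ cores := by decide

theorem invRev_mem_cores : ∀ δ ∈ cores, invRev δ ∈ cores := by decide

theorem card_blockingLetters_of_mem_cores : ∀ δ ∈ cores, #(blockingLetters δ) = 2 := by decide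

theorem card_cores : #cores = 8 := rfl

theorem exists_mem_cores_zpow_eq {γ : F2} (hγ : γ ∈ ({α, β, α * β} : Set F2)) {k : ℤ} (hk : k ≠ 0)
    (heven : γ ∈ ({α, β} : Set F2) → Even k) : ∃ δ ∈ cores, ∃ m ≠ 0, γ ^ k = mk δ ^ m := by
  obtain ⟨δ, hδ, j, hj, h⟩ : ∃ δ ∈ cores, ∃ j : ℤ, j ≠ 0 ∧ γ ^ k = mk δ ^ j := by
    rcases hγ with rfl | rfl | rfl
    · obtain ⟨j, rfl⟩ := heven (by simp)
      exact ⟨[(0, true), (0, true)], by decide, j, by omega, by rw [← two_mul, zpow_mul]; rfl⟩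
    · obtain ⟨j, rfl⟩ := heven (by simp)
      exact ⟨[(1, true), (1, true)], by decide, j, by omega, by rw [← two_mul, zpow_mul]; rfl⟩
    · exact ⟨[(0, true), (1, true)], by decide, k, hk, rfl⟩
  rcases zpow_eq_pow_natAbs_or (mk δ) j with h' | h'
  · exact ⟨δ, hδ, j.natAbs, by omega, h.trans h'⟩
  · exact ⟨invRev δ, invRev_mem_cores δ hδ, j.natAbs, by omega, by rw [h, h', inv_mk]⟩

def IsConjOfPow (g : F2) : Prop :=
  ∃ (w : F2) (k : ℤ) (γ : F2), γ ∈ ({α, β, α * β} : Set F2) ∧ g = w * γ ^ k * w⁻¹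

theorem IsConjOfPow.conj_pow {g : F2} (h : IsConjOfPow g) (v : F2) (m : ℕ) :
    IsConjOfPow (v * g ^ m * v⁻¹) := by
  obtain ⟨w, k, γ, hγ, rfl⟩ := h
  exact ⟨v * w, k * m, γ, hγ, by rw [_root_.conj_pow, zpow_mul, zpow_natCast]; group⟩

theorem isConjOfPow_mk_of_mem_cores : ∀ δ ∈ cores, IsConjOfPow (mk δ) := by
  simp only [cores, Finset.mem_insert, Finset.mem_singleton]
  rintro δ (rfl | rfl | rfl | rfl | rfl | rfl | rfl | rfl)
  · exact ⟨1, 2, α, by simp, show α * α = _ by simp [sq]⟩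
  · exact ⟨1, -2, α, by simp, show α⁻¹ * α⁻¹ = _ by group⟩
  · exact ⟨1, 2, β, by simp, show β * β = _ by simp [sq]⟩
  · exact ⟨1, -2, β, by simp, show β⁻¹ * β⁻¹ = _ by group⟩
  · exact ⟨1, 1, α * β, by simp, show α * β = _ by group⟩
  · exact ⟨α⁻¹, 1, α * β, by simp, show β * α = _ by group⟩
  · exact ⟨1, -1, α * β, by simp, show (α * β)⁻¹ = _ by group⟩
  · exact ⟨α⁻¹, -1, α * β, by simp, show (β * α)⁻¹ = _ by group⟩

def normalForms (r : ℕ) : Finset (Σ _ : List (Fin 2 × Bool), List (Fin 2 × Bool)) :=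
  cores.sigma fun δ => reducedConjugators δ r

def ofNormalForm (r : ℕ) (p : Σ _ : List (Fin 2 × Bool), List (Fin 2 × Bool)) : F2 :=
  mk p.2 * mk p.1 ^ (r + 1 - p.2.length) * (mk p.2)⁻¹

section NormalForms

variable {r : ℕ} {p : Σ _ : List (Fin 2 × Bool), List (Fin 2 × Bool)}

theorem mem_normalForms :
    p ∈ normalForms r ↔
      p.1 ∈ cores ∧ FreeGroup.IsReduced (p.2 ++ p.1 ++ invRev p.2) ∧ p.2.length ≤ r := by
  rw [normalForms, Finset.mem_sigma]
  refine and_congr_right fun hδ => ?_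
  exact mem_reducedConjugators (isCyclicallyReduced_of_mem_cores _ hδ).isReduced

theorem card_normalForms (r : ℕ) : #(normalForms r) = 8 * 3 ^ r := by
  rw [normalForms, card_sigma, sum_congr rfl fun δ hδ =>
    card_reducedConjugators (card_blockingLetters_of_mem_cores δ hδ) r, sum_const, card_cores]
  simp

theorem toWord_ofNormalForm (hp : p ∈ normalForms r) :
    (ofNormalForm r p).toWord =
      p.2 ++ (List.replicate (r + 1 - p.2.length) p.1).flatten ++ invRev p.2 := by
  obtain ⟨hδ, hred, hlen⟩ := mem_normalForms.1 hp
  exact toWord_conj_pow (isCyclicallyReduced_of_mem_cores _ hδ) hred (by omega)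

theorem norm_ofNormalForm (hp : p ∈ normalForms r) : (ofNormalForm r p).norm = 2 * r + 2 := by
  obtain ⟨hδ, hred, hlen⟩ := mem_normalForms.1 hp
  rw [ofNormalForm, norm_conj_pow (isCyclicallyReduced_of_mem_cores _ hδ) hred (by omega),
    length_of_mem_cores _ hδ]
  omega

end NormalForms

theorem injOn_ofNormalForm (r : ℕ) : Set.InjOn (ofNormalForm r) (normalForms r) := by
  rintro ⟨δ, u⟩ hp ⟨δ', u'⟩ hq h
  obtain ⟨hδ, -, hlen⟩ := mem_normalForms.1 hp
  obtain ⟨hδ', -, -⟩ := mem_normalForms.1 hq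
  have hwords := congrArg toWord h
  rw [toWord_ofNormalForm hp, toWord_ofNormalForm hq] at hwords
  obtain ⟨rfl, hpow⟩ := eq_of_append_append_invRev_eq
    ((isCyclicallyReduced_of_mem_cores _ hδ).flatten_replicate _)
    ((isCyclicallyReduced_of_mem_cores _ hδ').flatten_replicate _) hwords
  have hm : r + 1 - u.length ≠ 0 := by dsimp only at hlen; omega
  have : δ = δ' := by
    rw [← δ.take_length_flatten_replicate hm, ← δ'.take_length_flatten_replicate hm,
      length_of_mem_cores _ hδ, length_of_mem_cores _ hδ']
    exact congrArg (List.take 2) hpow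
  rw [this]

theorem mem_image_ofNormalForm {r : ℕ} {g : F2} (hg : g.norm = 2 * r + 2) (hconj : IsConjOfPow g) :
    g ∈ ofNormalForm r '' normalForms r := by
  obtain ⟨w, k, γ, hγ, rfl⟩ := hconj
  have hk : k ≠ 0 := by
    rintro rfl
    simp at hg
  have hnorm : Even (w * γ ^ k * w⁻¹).norm := hg ▸ ⟨r + 1, by ring⟩
  have heven : γ ∈ ({α, β} : Set F2) → Even k := by
    rintro (rfl | rfl)
    · exact (even_norm_conj_of_zpow_iff w 0 k).1 hnorm
    · exact (even_norm_conj_of_zpow_iff w 1 k).1 hnorm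
  obtain ⟨δ, hδ, m, hm, hpow⟩ := exists_mem_cores_zpow_eq hγ hk heven
  obtain ⟨u, δ', hδ', hred, hconj⟩ := exists_isReduced_conj (C := cores)
    (fun c hc => ⟨(isCyclicallyReduced_of_mem_cores c hc).isReduced,
      List.ne_nil_of_length_pos (by simp [length_of_mem_cores c hc])⟩)
    rotate_mem_cores w hδ
  have hg' : w * γ ^ k * w⁻¹ = mk u * mk δ' ^ m * (mk u)⁻¹ := by
    rw [hpow, ← conj_pow, hconj, conj_pow]
  rw [hg', norm_conj_pow (isCyclicallyReduced_of_mem_cores _ hδ') hred hm,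
    length_of_mem_cores _ hδ'] at hg
  refine ⟨⟨δ', u⟩, mem_normalForms.2 ⟨hδ', hred, (by omega : u.length ≤ r)⟩, ?_⟩
  rw [hg', ofNormalForm, show r + 1 - u.length = m by omega]

theorem setOf_eq_image_ofNormalForm (r : ℕ) :
    {g : F2 | g.norm = 2 * r + 2 ∧ IsConjOfPow g} = ofNormalForm r '' normalForms r := by
  refine Set.Subset.antisymm (fun g ⟨hg, hconj⟩ => mem_image_ofNormalForm hg hconj) ?_
  rintro _ ⟨p, hp, rfl⟩
  exact ⟨norm_ofNormalForm hp, (isConjOfPow_mk_of_mem_cores _ (mem_normalForms.1 hp).1).conj_pow _ _⟩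

/-- The number of elements of word length exactly `2r+2` conjugate to a power of
`α`, `β`, or `αβ` is `8·3^r`. -/
theorem card_reducible_even (r : ℕ) :
    Nat.card {g : F2 | FreeGroup.norm g = 2 * r + 2 ∧
      ∃ (w : F2) (k : ℤ) (γ : F2), γ ∈ ({α, β, α * β} : Set F2) ∧
        g = w * γ ^ k * w⁻¹} = 8 * 3 ^ r := by
  rw [Nat.card_coe_set_eq, ← card_normalForms r, ← Set.ncard_coe_finset,
    ← (injOn_ofNormalForm r).ncard_image]
  exact congrArg Set.ncard (setOf_eq_image_ofNormalForm r)
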